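/- Let g ≥ 1 be an integer and let Σ_g denote the genus-g surface group, i.e. the presented group with generators a₁, b₁, …, a_g, b_g and the single relator [a₁,b₁]·[a₂,b₂]⋯[a_g,b_g], where [x,y] = x·y·x⁻¹·y⁻¹. Let ℍ denote the real quaternions, ℍˣ its group of units, Z the center of ℍˣ, and π : ℍˣ → ℍˣ/Z the quotient homomorphism. Then: (1) there exists a group homomorphism ρ : Σ_g → ℍˣ/Z with ρ(a₁) = π(i), ρ(b₁) = π(j), and ρ(a_k) = ρ(b_k) = 1 for 2 ≤ k ≤ g; and (2) for any such ρ there is no group homomorphism ρ̃ : Σ_g → ℍˣ with π ∘ ρ̃ = ρ. -/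

import Mathlib

/-!
When the images of all handles but the first commute, the relator maps to the commutator of the
images of `a₁, b₁`. In `ℍˣ/Z` this is `⁅π i, π j⁆ = π(-1) = 1`, which gives `ρ`. A commutator only
depends on the classes of its entries modulo the centre, so a lift `ρ̃` would have to send the
relator to `⁅i, j⁆ = -1 ≠ 1`.
-/

open scoped commutatorElement

/-- The single relator `[a₁,b₁]·[a₂,b₂]⋯[a_g,b_g]` of the genus-`g` surface group,
where the generator `aᵢ` is `Sum.inl i` and `bᵢ` is `Sum.inr i`. -/
def surfaceRelator (g : ℕ) : FreeGroup (Fin g ⊕ Fin g) :=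
  (List.ofFn fun i : Fin g => ⁅FreeGroup.of (Sum.inl i : Fin g ⊕ Fin g), FreeGroup.of (Sum.inr i : Fin g ⊕ Fin g)⁆).prod

/-- The quaternion unit `i`, as an element of the group of units `ℍˣ`. -/
noncomputable def quatI : (Quaternion ℝ)ˣ :=
  Units.mk0 (⟨0, 1, 0, 0⟩ : Quaternion ℝ) (by
    intro h; have := congrArg QuaternionAlgebra.imI h; exact one_ne_zero this)

/-- The quaternion unit `j`, as an element of the group of units `ℍˣ`. -/
noncomputable def quatJ : (Quaternion ℝ)ˣ :=
  Units.mk0 (⟨0, 0, 1, 0⟩ : Quaternion ℝ) (by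
    intro h; have := congrArg QuaternionAlgebra.imJ h; exact one_ne_zero this)

section Commutator

variable {G : Type*} [Group G]

theorem commutatorElement_mul_mem_center_left (a b : G) {c : G} (hc : c ∈ Subgroup.center G) :
    ⁅a * c, b⁆ = ⁅a, b⁆ :=
  calc ⁅a * c, b⁆ = a * (c * b) * c⁻¹ * a⁻¹ * b⁻¹ := by group
    _ = a * (b * c) * c⁻¹ * a⁻¹ * b⁻¹ := by rw [Subgroup.mem_center_iff.mp hc b]
    _ = ⁅a, b⁆ := by group

theorem commutatorElement_eq_of_mk_eq_left {a b x : G}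
    (hx : (x : G ⧸ Subgroup.center G) = a) : ⁅x, b⁆ = ⁅a, b⁆ := by
  rw [← mul_inv_cancel_left a x]
  exact commutatorElement_mul_mem_center_left a b (QuotientGroup.eq.mp hx.symm)

theorem commutatorElement_eq_of_mk_eq {a b x y : G} (hx : (x : G ⧸ Subgroup.center G) = a)
    (hy : (y : G ⧸ Subgroup.center G) = b) : ⁅x, y⁆ = ⁅a, b⁆ := by
  rw [commutatorElement_eq_of_mk_eq_left hx, ← commutatorElement_inv,
    commutatorElement_eq_of_mk_eq_left hy, commutatorElement_inv]

end Commutator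

theorem List.prod_ofFn_eq_apply_zero {M : Type*} [Monoid M] {n : ℕ} (hn : 1 ≤ n) (f : Fin n → M)
    (h : ∀ k : Fin n, k ≠ ⟨0, hn⟩ → f k = 1) : (List.ofFn f).prod = f ⟨0, hn⟩ := by
  obtain ⟨n, rfl⟩ : ∃ m, n = m + 1 := ⟨n - 1, by omega⟩
  rw [List.ofFn_succ, List.prod_cons, List.prod_eq_one, mul_one]
  · rfl
  · simp only [List.mem_ofFn, forall_exists_index]
    rintro _ k rfl
    exact h _ (Fin.succ_ne_zero k)

section SurfaceGroup

variable {G : Type*} [Group G] {g : ℕ}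

theorem map_surfaceRelator_eq_commutatorElement (hg : 1 ≤ g) (φ : FreeGroup (Fin g ⊕ Fin g) →* G)
    (h : ∀ k : Fin g, k ≠ ⟨0, hg⟩ →
      ⁅φ (FreeGroup.of (Sum.inl k)), φ (FreeGroup.of (Sum.inr k))⁆ = 1) :
    φ (surfaceRelator g) =
      ⁅φ (FreeGroup.of (Sum.inl ⟨0, hg⟩)), φ (FreeGroup.of (Sum.inr ⟨0, hg⟩))⁆ := by
  simp only [surfaceRelator, map_list_prod, List.map_ofFn, Function.comp_def,
    map_commutatorElement]
  exact List.prod_ofFn_eq_apply_zero hg _ h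

theorem exists_surfaceGroup_hom_of_commutatorElement_eq_one (hg : 1 ≤ g) {x y : G}
    (hxy : ⁅x, y⁆ = 1) :
    ∃ ρ : PresentedGroup {surfaceRelator g} →* G,
      ρ (PresentedGroup.of (Sum.inl ⟨0, hg⟩)) = x ∧ ρ (PresentedGroup.of (Sum.inr ⟨0, hg⟩)) = y ∧
      ∀ k : Fin g, k ≠ ⟨0, hg⟩ →
        ρ (PresentedGroup.of (Sum.inl k)) = 1 ∧ ρ (PresentedGroup.of (Sum.inr k)) = 1 := by
  let f : Fin g ⊕ Fin g → G := Sum.elim (Pi.mulSingle ⟨0, hg⟩ x) (Pi.mulSingle ⟨0, hg⟩ y)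
  have hf : FreeGroup.lift f (surfaceRelator g) = 1 := by
    rw [map_surfaceRelator_eq_commutatorElement hg]
    · simpa [f] using hxy
    · intro k hk
      simp [f, hk]
  refine ⟨PresentedGroup.toGroup (f := f) fun r hr => by rwa [Set.mem_singleton_iff.mp hr],
    by simp [PresentedGroup.toGroup.of, f], by simp [PresentedGroup.toGroup.of, f],
    fun k hk => by simp [PresentedGroup.toGroup.of, f, hk]⟩

theorem commutatorElement_first_handle_eq_one (hg : 1 ≤ g)
    (ρ : PresentedGroup {surfaceRelator g} →* G)
    (h : ∀ k : Fin g, k ≠ ⟨0, hg⟩ →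
      ⁅ρ (PresentedGroup.of (Sum.inl k)), ρ (PresentedGroup.of (Sum.inr k))⁆ = 1) :
    ⁅ρ (PresentedGroup.of (Sum.inl ⟨0, hg⟩)), ρ (PresentedGroup.of (Sum.inr ⟨0, hg⟩))⁆ = 1 :=
  (map_surfaceRelator_eq_commutatorElement hg (ρ.comp (PresentedGroup.mk _)) h).symm.trans <| by
    rw [MonoidHom.comp_apply, PresentedGroup.one_of_mem (Set.mem_singleton _), map_one]

end SurfaceGroup

theorem val_quatI : (quatI : Quaternion ℝ) = ⟨0, 1, 0, 0⟩ := rfl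

theorem val_quatJ : (quatJ : Quaternion ℝ) = ⟨0, 0, 1, 0⟩ := rfl

theorem quatI_mul_quatJ : quatI * quatJ = -(quatJ * quatI) := by
  rw [Units.ext_iff, Units.val_neg, Units.val_mul, Units.val_mul, Quaternion.ext_iff]
  simp only [Quaternion.re_mul, Quaternion.imI_mul, Quaternion.imJ_mul, Quaternion.imK_mul,
    Quaternion.re_neg, Quaternion.imI_neg, Quaternion.imJ_neg, Quaternion.imK_neg]
  simp [val_quatI, val_quatJ]

theorem commutatorElement_quatI_quatJ : ⁅quatI, quatJ⁆ = -1 := by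
  rw [commutatorElement_def, mul_inv_eq_iff_eq_mul, mul_inv_eq_iff_eq_mul, quatI_mul_quatJ,
    neg_one_mul, neg_mul]

theorem Units.neg_one_mem_center {M : Type*} [Monoid M] [HasDistribNeg M] :
    (-1 : Mˣ) ∈ Subgroup.center Mˣ :=
  Subgroup.mem_center_iff.mpr fun a => by rw [mul_neg_one, neg_one_mul]

/-- there is a homomorphism `ρ` from the genus-`g` surface group
(`g ≥ 1`) to `ℍˣ/Z(ℍˣ)` with `ρ(a₁) = π(i)`, `ρ(b₁) = π(j)` and `ρ(a_k) = ρ(b_k) = 1`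
for `k ≥ 2`; and no such `ρ` lifts to a homomorphism into `ℍˣ`. -/
theorem stmt6 (g : ℕ) (hg : 1 ≤ g) :
    (∃ ρ : PresentedGroup {surfaceRelator g} →*
        ((Quaternion ℝ)ˣ ⧸ Subgroup.center (Quaternion ℝ)ˣ),
      ρ (PresentedGroup.of (Sum.inl (⟨0, hg⟩ : Fin g))) =
          QuotientGroup.mk' (Subgroup.center (Quaternion ℝ)ˣ) quatI ∧
      ρ (PresentedGroup.of (Sum.inr (⟨0, hg⟩ : Fin g))) =
          QuotientGroup.mk' (Subgroup.center (Quaternion ℝ)ˣ) quatJ ∧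
      ∀ k : Fin g, k ≠ ⟨0, hg⟩ →
        ρ (PresentedGroup.of (Sum.inl k)) = 1 ∧
        ρ (PresentedGroup.of (Sum.inr k)) = 1) ∧
    (∀ ρ : PresentedGroup {surfaceRelator g} →*
        ((Quaternion ℝ)ˣ ⧸ Subgroup.center (Quaternion ℝ)ˣ),
      (ρ (PresentedGroup.of (Sum.inl (⟨0, hg⟩ : Fin g))) =
          QuotientGroup.mk' (Subgroup.center (Quaternion ℝ)ˣ) quatI ∧
       ρ (PresentedGroup.of (Sum.inr (⟨0, hg⟩ : Fin g))) =
          QuotientGroup.mk' (Subgroup.center (Quaternion ℝ)ˣ) quatJ ∧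
       ∀ k : Fin g, k ≠ ⟨0, hg⟩ →
         ρ (PresentedGroup.of (Sum.inl k)) = 1 ∧
         ρ (PresentedGroup.of (Sum.inr k)) = 1) →
      ¬ ∃ ρ' : PresentedGroup {surfaceRelator g} →* (Quaternion ℝ)ˣ,
          (QuotientGroup.mk' (Subgroup.center (Quaternion ℝ)ˣ)).comp ρ' = ρ) := by
  constructor
  · refine exists_surfaceGroup_hom_of_commutatorElement_eq_one hg ?_
    rw [← map_commutatorElement, commutatorElement_quatI_quatJ, QuotientGroup.mk'_apply,
      QuotientGroup.eq_one_iff]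
    exact Units.neg_one_mem_center
  · rintro _ ⟨hρa, hρb, hρk⟩ ⟨ρ', rfl⟩
    have hρ' := commutatorElement_first_handle_eq_one hg ρ' fun k hk => by
      rw [commutatorElement_eq_of_mk_eq (a := 1) (b := 1) (hρk k hk).1 (hρk k hk).2,
        commutatorElement_one_left]
    rw [commutatorElement_eq_of_mk_eq hρa hρb, commutatorElement_quatI_quatJ] at hρ'
    norm_num [Units.ext_iff, Quaternion.ext_iff, Quaternion.re_one] at hρ'
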